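/- Let Q be an n×n real matrix (indexed 0,…,n−1) satisfying the skip-free submatrix conditions: Q(i,i+1) > 0 for 0 ≤ i ≤ n−2; Q(i,j) = 0 whenever j > i+1; Q(i,j) ≥ 0 for all i ≠ j; Q(i,i) < 0 for all i; Σ_{j=0}^{n−1} Q(i,j) = 0 for 0 ≤ i ≤ n−2; and Σ_{j=0}^{n−1} Q(n−1,j) < 0. Set A := −Q and assume in addition that the symmetric part (A + Aᵀ)/2 is positive definite. Then for every bounded measurable function g : ℝⁿ → ℝ with g ≥ 0, ∫_{ℝⁿ}∫_{ℝⁿ} g(½(x₁² + y₁²),…,½(xₙ² + yₙ²)) · [exp(−(x+iy)ᵀA(x−iy)/2) + exp(−(x−iy)ᵀA(x+iy)/2)] dx dy ≥ 0. In other words, the signed measure μ_A^{abs}, defined as the pushforward of the normalized complex Gaussian measure μ*_A under z ↦ (½|z₁|²,…,½|zₙ|²), is a (nonnegative) probability measure. -/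

import Mathlib

/-!
Write `z = x + iy ∈ ℂⁿ`. The integrand depends on `z` only through the `|z_j|²` and through
`exp (-zᵀ A z̄ / 2)`, so averaging over the measure-preserving torus action
`z ↦ (e^{iθ_j} z_j)` does not change the integral, and it suffices that every torus average be
nonnegative. With `u_j = e^{iθ_j} z_j` we have `-uᵀ A ū / 2 = -∑ A_jj |z_j|² / 2 + ∑_{i ≠ j} β_ij u_i ū_j`
with `β = -A / 2 = Q / 2` nonnegative off the diagonal. The first term does not depend on `θ`. In
the exponential series of the second, every monomial `∏_l u_{a_l} ū_{b_l}` has torus average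
`∏_j ∫ (e^{iθ} z_j)^{m_j} (conj (e^{iθ} z_j))^{m'_j} dθ`, which is `2π |z_j|^{2 m_j} ≥ 0` when
`m_j = m'_j` and `0` otherwise.
-/

open MeasureTheory Matrix

/-- `Q` is the upper `n × n` submatrix of the generator of a skip-free (to the left)
Markov process on `ℤ⁺`. -/
def IsSkipFreeSubmatrix {n : ℕ} (Q : Matrix (Fin n) (Fin n) ℝ) : Prop :=
  (∀ i j : Fin n, (j : ℕ) = (i : ℕ) + 1 → 0 < Q i j) ∧
  (∀ i j : Fin n, (i : ℕ) + 1 < (j : ℕ) → Q i j = 0) ∧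
  (∀ i j : Fin n, i ≠ j → 0 ≤ Q i j) ∧
  (∀ i : Fin n, Q i i < 0) ∧
  (∀ i : Fin n, (i : ℕ) < n - 1 → ∑ j, Q i j = 0) ∧
  (∀ i : Fin n, (i : ℕ) = n - 1 → ∑ j, Q i j < 0)

noncomputable section

open Complex
open scoped ComplexConjugate ComplexOrder Real Nat

namespace Complex

lemma ofReal_re_sub_ofReal_im_mul_I (z : ℂ) : (z.re : ℂ) - z.im * I = conj z := by
  apply Complex.ext <;> simp

lemma re_sq_add_im_sq (z : ℂ) : z.re ^ 2 + z.im ^ 2 = ‖z‖ ^ 2 := by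
  rw [Complex.sq_norm, normSq_apply]; ring

lemma abs_re_exp_le (w : ℂ) : |(exp w).re| ≤ Real.exp w.re :=
  (abs_re_le_norm _).trans (norm_exp w).le

lemma re_exp_neg_div_two_add_exp_conj (s : ℂ) :
    (exp (-s / 2) + exp (-conj s / 2)).re = 2 * (exp (-s / 2)).re := by
  rw [show -conj s / 2 = conj (-s / 2) by rw [map_div₀, map_neg, map_ofNat], Complex.exp_conj,
    add_re, conj_re]
  ring

end Complex

theorem integral_nonneg_of_integral_comp_nonneg {Θ X : Type*} [MeasurableSpace Θ]
    [MeasurableSpace X] {ν : Measure Θ} [IsFiniteMeasure ν] (hν : ν ≠ 0) {μ : Measure X}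
    [SFinite μ] {Φ : Θ → X → X} (hΦ : Measurable (Function.uncurry Φ))
    (hΦμ : ∀ θ, MeasurePreserving (Φ θ) μ μ) {f : X → ℝ} (hf : Measurable f)
    (hfi : Integrable f μ) (h : ∀ x, 0 ≤ ∫ θ, f (Φ θ x) ∂ν) : 0 ≤ ∫ x, f x ∂μ := by
  have hcomp (θ : Θ) (F : X → ℝ) (hF : Measurable F) : ∫ x, F (Φ θ x) ∂μ = ∫ x, F x ∂μ := by
    rw [← integral_map (hΦμ θ).aemeasurable hF.aestronglyMeasurable, (hΦμ θ).map_eq]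
  have hint : Integrable (Function.uncurry fun θ x => f (Φ θ x)) (ν.prod μ) := by
    refine (integrable_prod_iff (hf.comp hΦ).aestronglyMeasurable).2 ⟨?_, ?_⟩
    · exact .of_forall fun θ => ((hΦμ θ).integrable_comp hf.aestronglyMeasurable).2 hfi
    · exact (integrable_const _).congr (.of_forall fun θ => (hcomp θ _ hf.norm).symm)
  have hswap := integral_integral_swap hint
  simp only [hcomp _ _ hf, integral_const, smul_eq_mul] at hswap
  have hpos : 0 < ν.real Set.univ := by
    rw [measureReal_def]
    exact ENNReal.toReal_pos (Measure.measure_univ_ne_zero.2 hν) (measure_ne_top _ _)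
  exact nonneg_of_mul_nonneg_right (hswap ▸ integral_nonneg h) hpos

theorem integral_cexp_nonneg_of_integral_pow_nonneg {α : Type*} [MeasurableSpace α]
    {μ : Measure α} [IsFiniteMeasure μ] {G : α → ℂ} (hG : AEStronglyMeasurable G μ) {M : ℝ}
    (hM : ∀ x, ‖G x‖ ≤ M) (hpow : ∀ k : ℕ, 0 ≤ ∫ x, G x ^ k ∂μ) :
    0 ≤ ∫ x, exp (G x) ∂μ := by
  have hbound (k : ℕ) (x : α) : ‖G x ^ k / (k ! : ℂ)‖ ≤ M ^ k / (k ! : ℝ) := by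
    rw [norm_div, norm_pow, norm_natCast]
    gcongr
    exact hM x
  have hint (k : ℕ) : Integrable (fun x => G x ^ k / (k ! : ℂ)) μ :=
    .of_bound (by fun_prop) _ (.of_forall (hbound k))
  have hsum : Summable fun k : ℕ => ∫ x, ‖G x ^ k / (k ! : ℂ)‖ ∂μ := by
    refine ((Real.summable_pow_div_factorial M).mul_left (μ.real Set.univ)).of_nonneg_of_le
      (fun k => integral_nonneg fun x => norm_nonneg _) fun k => ?_
    refine (integral_mono (hint k).norm (integrable_const _) (hbound k)).trans_eq ?_
    rw [integral_const, smul_eq_mul]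
  simp_rw [exp_eq_exp_ℂ, NormedSpace.exp_eq_tsum_div]
  refine (hasSum_integral_of_summable_integral_norm hint hsum).nonneg fun k => ?_
  rw [integral_div]
  exact div_nonneg (hpow k) (Nat.cast_nonneg _)

section TorusAction

variable {ι : Type*}

def torusRotate (θ : ι → ℝ) (z : ι → ℂ) : ι → ℂ := fun j => exp (θ j * I) * z j

lemma norm_torusRotate (θ : ι → ℝ) (z : ι → ℂ) (j : ι) : ‖torusRotate θ z j‖ = ‖z j‖ := by
  simp [torusRotate, norm_exp_ofReal_mul_I]

lemma continuous_torusRotate : Continuous fun p : (ι → ℝ) × (ι → ℂ) => torusRotate p.1 p.2 := by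
  unfold torusRotate; fun_prop

lemma measurePreserving_torusRotate [Fintype ι] (θ : ι → ℝ) :
    MeasurePreserving (torusRotate θ) :=
  volume_preserving_pi fun j => (rotation (Circle.exp (θ j))).measurePreserving

lemma exists_norm_comp_torusRotate_le {E : Type*} [NormedAddCommGroup E] {f : (ι → ℂ) → E}
    (hf : Continuous f) (z : ι → ℂ) : ∃ C, ∀ θ, ‖f (torusRotate θ z)‖ ≤ C := by
  obtain ⟨C, hC⟩ := (isCompact_univ_pi fun j => isCompact_sphere (0 : ℂ) ‖z j‖)
    |>.exists_bound_of_continuousOn hf.continuousOn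
  exact ⟨C, fun θ => hC _ fun j _ => by simp [norm_torusRotate]⟩

lemma integrable_comp_torusRotate [Fintype ι] {E : Type*} [NormedAddCommGroup E]
    {f : (ι → ℂ) → E} (hf : Continuous f) (z : ι → ℂ) (ν : Measure (ι → ℝ))
    [IsFiniteMeasure ν] : Integrable (fun θ => f (torusRotate θ z)) ν := by
  obtain ⟨C, hC⟩ := exists_norm_comp_torusRotate_le hf z
  exact .of_bound (hf.comp (continuous_torusRotate.comp (.prodMk_left z))).aestronglyMeasurable
    C (.of_forall hC)

def measurableEquivRealPiProd (ι : Type*) : (ι → ℂ) ≃ᵐ (ι → ℝ) × (ι → ℝ) :=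
  (MeasurableEquiv.piCongrRight fun _ => measurableEquivRealProd).trans
    (MeasurableEquiv.arrowProdEquivProdArrow ℝ ℝ ι)

lemma measurableEquivRealPiProd_apply (z : ι → ℂ) :
    measurableEquivRealPiProd ι z = (fun j => (z j).re, fun j => (z j).im) := rfl

lemma volume_preserving_measurableEquivRealPiProd [Fintype ι] :
    MeasurePreserving (measurableEquivRealPiProd ι) :=
  (volume_preserving_pi fun _ => volume_preserving_equiv_real_prod).trans
    (volume_measurePreserving_arrowProdEquivProdArrow ℝ ℝ ι)

end TorusAction

variable {ι : Type*} [Fintype ι]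

abbrev torusMeasure (ι : Type*) [Fintype ι] : Measure (ι → ℝ) :=
  Measure.pi fun _ => volume.restrict (Set.Ioc 0 (2 * π))

lemma torusMeasure_ne_zero : torusMeasure ι ≠ 0 := by
  rw [← Measure.measure_univ_ne_zero, Measure.pi_univ]
  simp [Real.pi_pos]

lemma setIntegral_Ioc_exp_int_mul_I_eq_zero {k : ℤ} (hk : k ≠ 0) :
    ∫ t in Set.Ioc 0 (2 * π), exp (k * t * I) = 0 := by
  have hc : (k * I : ℂ) ≠ 0 := mul_ne_zero (by exact_mod_cast hk) I_ne_zero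
  simp_rw [mul_right_comm _ _ I]
  rw [← intervalIntegral.integral_of_le (by positivity), integral_exp_mul_complex hc]
  have : k * I * ↑(2 * π) = k * (2 * π * I) := by push_cast; ring
  rw [this, exp_int_mul_two_pi_mul_I]
  simp

lemma setIntegral_Ioc_pow_mul_conj_pow_nonneg (w : ℂ) (m m' : ℕ) :
    0 ≤ ∫ t in Set.Ioc 0 (2 * π), (exp (t * I) * w) ^ m * conj (exp (t * I) * w) ^ m' := by
  rcases eq_or_ne m m' with rfl | hm
  · refine integral_nonneg fun t => ?_
    rw [← mul_pow, mul_conj]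
    exact pow_nonneg (zero_le_real.2 (normSq_nonneg _)) m
  have h (t : ℝ) : (exp (t * I) * w) ^ m * conj (exp (t * I) * w) ^ m'
      = w ^ m * conj w ^ m' * exp (((m - m' : ℤ) : ℂ) * t * I) := by
    have e : exp (t * I) ^ m * conj (exp (t * I)) ^ m' = exp (((m - m' : ℤ) : ℂ) * t * I) := by
      rw [← Complex.exp_conj, ← exp_nat_mul, ← exp_nat_mul, ← exp_add, map_mul, conj_ofReal,
        conj_I]
      push_cast
      ring_nf
    rw [map_mul, mul_pow, mul_pow, ← e]
    ring
  simp_rw [h]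
  rw [integral_const_mul, setIntegral_Ioc_exp_int_mul_I_eq_zero (by omega), mul_zero]

lemma integral_torusMeasure_prod_mul_conj_nonneg {k : ℕ} (z : ι → ℂ) (F : Fin k → ι × ι) :
    0 ≤ ∫ θ, ∏ l, torusRotate θ z (F l).1 * conj (torusRotate θ z (F l).2) ∂torusMeasure ι := by
  classical
  have h (θ : ι → ℝ) : ∏ l, torusRotate θ z (F l).1 * conj (torusRotate θ z (F l).2)
      = ∏ j, (exp (θ j * I) * z j) ^ Fintype.card {l // (F l).1 = j}
          * conj (exp (θ j * I) * z j) ^ Fintype.card {l // (F l).2 = j} := by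
    rw [Finset.prod_mul_distrib, Finset.prod_mul_distrib,
      ← Fintype.prod_fiberwise' (fun l => (F l).1),
      ← Fintype.prod_fiberwise' (fun l => (F l).2) fun j => conj (torusRotate θ z j)]
    simp [torusRotate, Finset.prod_const]
  simp_rw [h]
  rw [torusMeasure, integral_fintype_prod_eq_prod fun j (t : ℝ) =>
    (exp (t * I) * z j) ^ Fintype.card {l // (F l).1 = j}
      * conj (exp (t * I) * z j) ^ Fintype.card {l // (F l).2 = j}]
  exact Finset.prod_nonneg fun j _ => setIntegral_Ioc_pow_mul_conj_pow_nonneg _ _ _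

def sesqForm (B : Matrix ι ι ℝ) (z : ι → ℂ) : ℂ := ∑ i, ∑ j, z i * B i j * conj (z j)

@[fun_prop]
lemma continuous_sesqForm (B : Matrix ι ι ℝ) : Continuous (sesqForm B) := by
  unfold sesqForm; fun_prop

lemma sesqForm_add (B C : Matrix ι ι ℝ) (z : ι → ℂ) :
    sesqForm (B + C) z = sesqForm B z + sesqForm C z := by
  simp only [sesqForm, Matrix.add_apply, ofReal_add, mul_add, add_mul, Finset.sum_add_distrib]

lemma sesqForm_smul (c : ℝ) (B : Matrix ι ι ℝ) (z : ι → ℂ) :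
    sesqForm (c • B) z = c * sesqForm B z := by
  simp only [sesqForm, Matrix.smul_apply, smul_eq_mul, ofReal_mul, Finset.mul_sum]
  congr! 2; ring

lemma sesqForm_diagonal [DecidableEq ι] (d : ι → ℝ) (z : ι → ℂ) :
    sesqForm (diagonal d) z = ((∑ i, d i * normSq (z i) : ℝ) : ℂ) := by
  simp only [sesqForm, diagonal_apply, apply_ite ofReal, ofReal_zero, mul_ite, ite_mul, mul_zero,
    zero_mul, Finset.sum_ite_eq, Finset.mem_univ, if_true, ofReal_sum, ofReal_mul]
  congr! 1 with i
  rw [mul_right_comm, mul_conj, mul_comm]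

lemma conj_sesqForm (B : Matrix ι ι ℝ) (z : ι → ℂ) :
    conj (sesqForm B z) = ∑ i, ∑ j, conj (z i) * B i j * z j := by
  simp [sesqForm, map_sum]

lemma re_sesqForm (B : Matrix ι ι ℝ) (z : ι → ℂ) :
    (sesqForm B z).re = (fun j => (z j).re) ⬝ᵥ B *ᵥ (fun j => (z j).re)
      + (fun j => (z j).im) ⬝ᵥ B *ᵥ (fun j => (z j).im) := by
  simp only [sesqForm, re_sum, dotProduct, mulVec, Finset.mul_sum, ← Finset.sum_add_distrib]
  congr! 2 with i _ j _
  simp; ring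

lemma sesqForm_pow (B : Matrix ι ι ℝ) (z : ι → ℂ) (k : ℕ) :
    sesqForm B z ^ k
      = ∑ F : Fin k → ι × ι, ∏ l, z (F l).1 * B (F l).1 (F l).2 * conj (z (F l).2) := by
  rw [sesqForm, ← Fintype.sum_prod_type', Finset.sum_pow', Fintype.piFinset_univ]

lemma integral_torusMeasure_cexp_sesqForm_nonneg_of_nonneg {β : Matrix ι ι ℝ}
    (hβ : ∀ i j, 0 ≤ β i j) (z : ι → ℂ) :
    0 ≤ ∫ θ, exp (sesqForm β (torusRotate θ z)) ∂torusMeasure ι := by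
  have hG : Continuous (sesqForm β) := continuous_sesqForm β
  obtain ⟨M, hM⟩ := exists_norm_comp_torusRotate_le hG z
  refine integral_cexp_nonneg_of_integral_pow_nonneg
    (integrable_comp_torusRotate hG z _).aestronglyMeasurable hM fun k => ?_
  simp_rw [sesqForm_pow]
  rw [integral_finsetSum _ fun F _ => integrable_comp_torusRotate
    (f := fun w => ∏ l, w (F l).1 * β (F l).1 (F l).2 * conj (w (F l).2)) (by fun_prop) z _]
  refine Finset.sum_nonneg fun F _ => ?_
  have h (θ : ι → ℝ) :
      ∏ l, torusRotate θ z (F l).1 * β (F l).1 (F l).2 * conj (torusRotate θ z (F l).2)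
        = ((∏ l, β (F l).1 (F l).2 : ℝ) : ℂ)
          * ∏ l, torusRotate θ z (F l).1 * conj (torusRotate θ z (F l).2) := by
    rw [ofReal_prod, ← Finset.prod_mul_distrib]
    congr! 1 with l; ring
  simp_rw [h]
  rw [integral_const_mul]
  exact mul_nonneg (zero_le_real.2 (Finset.prod_nonneg fun l _ => hβ _ _))
    (integral_torusMeasure_prod_mul_conj_nonneg z F)

lemma integral_torusMeasure_cexp_sesqForm_nonneg {β : Matrix ι ι ℝ}
    (hβ : ∀ i j, i ≠ j → 0 ≤ β i j) (z : ι → ℂ) :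
    0 ≤ ∫ θ, exp (sesqForm β (torusRotate θ z)) ∂torusMeasure ι := by
  classical
  have hoff : ∀ i j, 0 ≤ (β - diagonal β.diag) i j := fun i j => by
    rcases eq_or_ne i j with rfl | hij <;> simp [*]
  have h (θ : ι → ℝ) : sesqForm β (torusRotate θ z)
      = ((∑ i, β i i * normSq (z i) : ℝ) : ℂ)
        + sesqForm (β - diagonal β.diag) (torusRotate θ z) := by
    have := sesqForm_add (diagonal β.diag) (β - diagonal β.diag) (torusRotate θ z)
    rw [add_sub_cancel, sesqForm_diagonal] at this
    simp [this, normSq_eq_norm_sq, norm_torusRotate]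
  simp_rw [h, exp_add, integral_const_mul, ← ofReal_exp]
  exact mul_nonneg (zero_le_real.2 (Real.exp_pos _).le)
    (integral_torusMeasure_cexp_sesqForm_nonneg_of_nonneg hoff z)

open scoped MatrixOrder Matrix.Norms.L2Operator in
lemma Matrix.PosDef.exists_pos_mul_dotProduct_self_le [DecidableEq ι] {S : Matrix ι ι ℝ}
    (hS : S.PosDef) : ∃ ε > 0, ∀ x, ε * (x ⬝ᵥ x) ≤ x ⬝ᵥ S *ᵥ x := by
  cases isEmpty_or_nonempty ι
  · exact ⟨1, one_pos, fun x => by simp [Subsingleton.elim x 0]⟩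
  obtain ⟨ε, hε, hεS⟩ := (CFC.exists_pos_algebraMap_le_iff hS.isHermitian.isSelfAdjoint).2
    fun _ hx => hS.isStrictlyPositive.spectrum_pos hx
  refine ⟨ε, hε, fun x => ?_⟩
  have := (Matrix.le_iff.1 hεS).dotProduct_mulVec_nonneg x
  rw [Algebra.algebraMap_eq_smul_one, sub_mulVec, smul_mulVec, one_mulVec, dotProduct_sub,
    dotProduct_smul, smul_eq_mul, star_trivial] at this
  linarith

lemma dotProduct_mulVec_half_smul_add_transpose (A : Matrix ι ι ℝ) (x : ι → ℝ) :
    x ⬝ᵥ ((1 / 2 : ℝ) • (A + Aᵀ)) *ᵥ x = x ⬝ᵥ A *ᵥ x := by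
  rw [smul_mulVec, add_mulVec, dotProduct_smul, dotProduct_add, mulVec_transpose,
    dotProduct_comm x (x ᵥ* A), ← dotProduct_mulVec]
  simp only [smul_eq_mul]; ring

lemma integrable_exp_neg_re_sesqForm {A : Matrix ι ι ℝ}
    (hA : ((1 / 2 : ℝ) • (A + Aᵀ)).PosDef) :
    Integrable fun z : ι → ℂ => Real.exp (-(sesqForm A z).re / 2) := by
  classical
  obtain ⟨ε, hε, hεA⟩ := hA.exists_pos_mul_dotProduct_self_le
  have hgauss : Integrable fun w : ℂ => Real.exp (-(ε / 2) * ‖w‖ ^ 2) := by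
    simpa [Complex.norm_exp, ← ofReal_pow] using
      (GaussianFourier.integrable_cexp_neg_mul_sq_norm_add (b := ((ε / 2 : ℝ) : ℂ))
        (by simpa using hε) 0 (0 : ℂ)).norm
  refine (Integrable.fintype_prod (f := fun _ w => Real.exp (-(ε / 2) * ‖w‖ ^ 2))
    fun _ => hgauss).mono' (by fun_prop) (.of_forall fun z => ?_)
  rw [Real.norm_of_nonneg (Real.exp_pos _).le, ← Real.exp_sum, Real.exp_le_exp, re_sesqForm]
  have hre := hεA fun j => (z j).re
  have him := hεA fun j => (z j).im
  rw [dotProduct_mulVec_half_smul_add_transpose] at hre him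
  have hnorm : ∑ j, ‖z j‖ ^ 2 = (fun j => (z j).re) ⬝ᵥ (fun j => (z j).re)
      + (fun j => (z j).im) ⬝ᵥ (fun j => (z j).im) := by
    simp [dotProduct, ← Finset.sum_add_distrib, Complex.sq_norm, normSq_apply]
  rw [← Finset.mul_sum, hnorm]
  linarith

theorem integral_mul_re_cexp_neg_sesqForm_nonneg {A : Matrix ι ι ℝ}
    (hoff : ∀ i j, i ≠ j → A i j ≤ 0) (hA : ((1 / 2 : ℝ) • (A + Aᵀ)).PosDef)
    {h : (ι → ℂ) → ℝ} (hm : Measurable h) (h0 : ∀ z, 0 ≤ h z) (hbd : ∃ C, ∀ z, |h z| ≤ C)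
    (hrot : ∀ θ z, h (torusRotate θ z) = h z) :
    0 ≤ ∫ z, h z * (exp (-sesqForm A z / 2)).re := by
  have hexp : Continuous fun z => exp (-sesqForm A z / 2) := by fun_prop
  obtain ⟨C, hC⟩ := hbd
  refine integral_nonneg_of_integral_comp_nonneg torusMeasure_ne_zero
    continuous_torusRotate.measurable measurePreserving_torusRotate
    (hm.mul (continuous_re.comp hexp).measurable) ?_ fun z => ?_
  · refine Integrable.bdd_mul ?_ hm.aestronglyMeasurable (.of_forall hC)
    refine (integrable_exp_neg_re_sesqForm hA).mono'
      (continuous_re.comp hexp).aestronglyMeasurable (.of_forall fun z => ?_)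
    simpa [neg_div] using abs_re_exp_le (-sesqForm A z / 2)
  · have hneg (w : ι → ℂ) : -sesqForm A w / 2 = sesqForm (-(1 / 2 : ℝ) • A) w := by
      rw [sesqForm_smul]; push_cast; ring
    simp_rw [hrot, integral_const_mul, hneg]
    refine mul_nonneg (h0 z) ?_
    have hint := integrable_comp_torusRotate
      (f := fun w => exp (sesqForm (-(1 / 2 : ℝ) • A) w)) (by fun_prop) z (torusMeasure ι)
    have := (Complex.nonneg_iff.1 (integral_torusMeasure_cexp_sesqForm_nonneg
      (β := -(1 / 2 : ℝ) • A) (fun i j hij => by simp; linarith [hoff i j hij]) z)).1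
    rwa [← RCLike.re_to_complex, ← integral_re hint] at this

end

theorem skipFree_complex_gaussian_pushforward_nonneg {n : ℕ}
    (Q A : Matrix (Fin n) (Fin n) ℝ) (hQ : IsSkipFreeSubmatrix Q) (hA : A = -Q)
    (hC : (((1 : ℝ) / 2) • (A + Aᵀ)).PosDef)
    (g : (Fin n → ℝ) → ℝ) (hgm : Measurable g) (hg0 : ∀ v, 0 ≤ g v)
    (hgbd : ∃ Cb : ℝ, ∀ v, |g v| ≤ Cb) :
    0 ≤ ∫ p : (Fin n → ℝ) × (Fin n → ℝ),
        g (fun j => ((p.1 j) ^ 2 + (p.2 j) ^ 2) / 2) *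
          (Complex.exp (-(∑ i, ∑ j, ((p.1 i : ℂ) + (p.2 i : ℂ) * Complex.I) * (A i j : ℂ) *
              ((p.1 j : ℂ) - (p.2 j : ℂ) * Complex.I)) / 2)
            + Complex.exp (-(∑ i, ∑ j, ((p.1 i : ℂ) - (p.2 i : ℂ) * Complex.I) * (A i j : ℂ) *
              ((p.1 j : ℂ) + (p.2 j : ℂ) * Complex.I)) / 2)).re := by
  obtain ⟨Cb, hCb⟩ := hgbd
  have hoff (i j : Fin n) (hij : i ≠ j) : A i j ≤ 0 := by
    simpa [hA] using hQ.2.2.1 i j hij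
  rw [← volume_preserving_measurableEquivRealPiProd.integral_comp']
  simp only [measurableEquivRealPiProd_apply, Complex.re_add_im,
    Complex.ofReal_re_sub_ofReal_im_mul_I, ← conj_sesqForm, ← sesqForm.eq_1,
    Complex.re_exp_neg_div_two_add_exp_conj, Complex.re_sq_add_im_sq]
  simp_rw [mul_left_comm _ (2 : ℝ)]
  rw [integral_const_mul]
  exact mul_nonneg zero_le_two (integral_mul_re_cexp_neg_sesqForm_nonneg hoff hC
    (hgm.comp (by fun_prop)) (fun _ => hg0 _) ⟨Cb, fun _ => hCb _⟩
    fun θ z => by simp [norm_torusRotate])
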